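/- Let V : ℝ⁴ → ℝ⁴ be the Arctic lemming gonosomal operator V(x₁,x₂,x₃,u) = ( (1/2)x₁u + (1/4)x₂u, (1/4)x₂u + (1/3)x₃u, (1/4)x₂u + (1/3)x₃u, (1/2)x₁u + (1/4)x₂u + (1/3)x₃u ). Then the set of non-zero fixed points of V is exactly { (2,0,0,2), (36/25, 12/25, 12/25, 12/7) }. -/
import Mathlib


/-- The Arctic lemming gonosomal operator. -/
noncomputable def arcticOp (p : ℝ × ℝ × ℝ × ℝ) : ℝ × ℝ × ℝ × ℝ :=
  ((1 / 2) * p.1 * p.2.2.2 + (1 / 4) * p.2.1 * p.2.2.2,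
   (1 / 4) * p.2.1 * p.2.2.2 + (1 / 3) * p.2.2.1 * p.2.2.2,
   (1 / 4) * p.2.1 * p.2.2.2 + (1 / 3) * p.2.2.1 * p.2.2.2,
   (1 / 2) * p.1 * p.2.2.2 + (1 / 4) * p.2.1 * p.2.2.2 + (1 / 3) * p.2.2.1 * p.2.2.2)

theorem arcticOp_fixed_points :
    {p : ℝ × ℝ × ℝ × ℝ | arcticOp p = p ∧ p ≠ 0} =
      {((2 : ℝ), (0 : ℝ), (0 : ℝ), (2 : ℝ)),
       ((36 : ℝ) / 25, (12 : ℝ) / 25, (12 : ℝ) / 25, (12 : ℝ) / 7)} := by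
  ext ⟨x, y, z, u⟩
  simp only [Set.mem_setOf_eq, Set.mem_insert_iff, Set.mem_singleton_iff,
    arcticOp, Prod.mk.injEq, Prod.ext_iff, ne_eq, Prod.fst_zero, Prod.snd_zero]
  constructor
  · rintro ⟨⟨h1, h2, h3, h4⟩, hne⟩
    have hz : z = y := by linarith
    subst hz
    -- y * (1 - 7u/12) = 0
    have hy : z = 0 ∨ u = 12 / 7 := by
      rcases mul_eq_zero.mp (show z * (12 - 7 * u) = 0 by nlinarith) with h | h
      · exact Or.inl h
      · right; linarith
    rcases hy with hy | hu
    · subst hy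
      have hxu : u = x := by nlinarith
      subst hxu
      have : u = 0 ∨ u = 2 := by
        rcases mul_eq_zero.mp (show u * (u - 2) = 0 by nlinarith) with h | h
        · exact Or.inl h
        · right; linarith
      rcases this with h | h
      · exfalso; subst h; simp at hne
      · left; subst h; norm_num
    · subst hu
      right
      have hy : z = 12 / 25 := by nlinarith
      have hx : x = 36 / 25 := by nlinarith
      exact ⟨hx, hy, hy, rfl⟩
  · rintro (⟨hx, hy, hz, hu⟩ | ⟨hx, hy, hz, hu⟩) <;> subst hx <;> subst hy <;>
      subst hz <;> subst hu <;> norm_num
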